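/- Let n = 2p with p an odd prime, and let f be a homogeneous rotation symmetric Boolean function of even degree d = 2k > 2, written as f = (⊕_{i=1}^{s} f_i) ⊕ (⊕_{i=s+1}^{l} f_i) where f₁,…,f_s are short-cycle MRS functions and f_{s+1},…,f_l are full-cycle MRS functions with f_i generated by x₀x_{a_{i₁}}⋯x_{a_{i,d-1}}. If for every full-cycle f_i the number r of odd indices among {a_{i₁},…,a_{i,d-1}} satisfies 2 ≤ r ≤ d-2, then f is not bent. -/

import Mathlib

/-!
Every monomial of `f` contains at least two odd-index variables: for a full-cycle component
this is the hypothesis on `r`, because translating the index set either preserves or swaps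
parities; for a short-cycle component the index set is invariant under a nonzero translation,
which forces equally many odd and even indices. Hence `f` vanishes on every vector supported in
`J = {0, 2, …, 2p - 2, 2p - 1}`. Summing the Walsh transform over the `2 ^ |Jᶜ|` vectors
supported in `Jᶜ` gives exactly `2 ^ (2p)`, while bentness bounds that sum by
`2 ^ |Jᶜ| * 2 ^ p`; this forces `|J| ≤ p`, but `|J| = p + 1`.
-/

open Finset Pointwise

def chi (a : ZMod 2) : ℤ := (-1) ^ a.val

lemma chi_zero : chi 0 = 1 := rfl

lemma chi_add (a b : ZMod 2) : chi (a + b) = chi a * chi b := by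
  revert a b; decide

lemma chi_sum {ι : Type*} [DecidableEq ι] (s : Finset ι) (g : ι → ZMod 2) :
    chi (∑ i ∈ s, g i) = ∏ i ∈ s, chi (g i) := by
  induction s using Finset.induction with
  | empty => rfl
  | insert _ _ h ih => rw [sum_insert h, prod_insert h, chi_add, ih]

lemma sum_chi_mul (c : ZMod 2) : ∑ b : ZMod 2, chi (b * c) = if c = 0 then 2 else 0 := by
  revert c; decide

section Walsh

variable {α : Type*} [Fintype α] [DecidableEq α]

def walsh (f : (α → ZMod 2) → ZMod 2) (w : α → ZMod 2) : ℤ :=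
  ∑ x, chi (f x + ∑ i, w i * x i)

def supportedIn (J : Finset α) : Finset (α → ZMod 2) :=
  Fintype.piFinset fun t => if t ∈ J then univ else {0}

lemma mem_supportedIn {J : Finset α} {x : α → ZMod 2} :
    x ∈ supportedIn J ↔ ∀ t ∉ J, x t = 0 := by
  simp only [supportedIn, Fintype.mem_piFinset]
  refine forall_congr' fun t => ?_
  split_ifs with ht <;> simp [ht]

lemma card_supportedIn (J : Finset α) : #(supportedIn J) = 2 ^ #J := by
  simp [supportedIn, apply_ite card, prod_ite_mem]

lemma sum_supportedIn_chi_sum_mul (J : Finset α) (x : α → ZMod 2) :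
    ∑ w ∈ supportedIn J, chi (∑ t, w t * x t) =
      if x ∈ supportedIn Jᶜ then 2 ^ #J else 0 := by
  have hfactor : ∀ t, ∑ b ∈ (if t ∈ J then univ else {0}), chi (b * x t) =
      if t ∈ J then (if x t = 0 then 2 else 0) else 1 := fun t => by
    split_ifs <;> simp_all [sum_chi_mul, chi_zero]
  simp only [chi_sum]
  rw [supportedIn, ← prod_univ_sum (f := fun t b => chi (b * x t))]
  simp only [hfactor, prod_ite_mem, univ_inter, prod_ite_zero, prod_const, mem_supportedIn,
    mem_compl, not_not]

lemma sum_walsh_supportedIn_compl (f : (α → ZMod 2) → ZMod 2) {J : Finset α}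
    (hf : ∀ x ∈ supportedIn J, f x = 0) :
    ∑ w ∈ supportedIn Jᶜ, walsh f w = 2 ^ #Jᶜ * 2 ^ #J := by
  calc ∑ w ∈ supportedIn Jᶜ, walsh f w
      = ∑ x, chi (f x) * ∑ w ∈ supportedIn Jᶜ, chi (∑ t, w t * x t) := by
        simp only [walsh, chi_add, mul_sum]
        exact sum_comm
    _ = ∑ x ∈ supportedIn J, 2 ^ #Jᶜ := by
        simp only [sum_supportedIn_chi_sum_mul, compl_compl, mul_ite, mul_zero,
          sum_ite_mem, univ_inter]
        exact sum_congr rfl fun x hx => by rw [hf x hx, chi_zero, one_mul]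
    _ = 2 ^ #Jᶜ * 2 ^ #J := by
        rw [sum_const, card_supportedIn, nsmul_eq_mul, mul_comm]; push_cast; rfl

theorem card_le_of_abs_walsh_le (f : (α → ZMod 2) → ZMod 2) {J : Finset α} {m : ℕ}
    (hf : ∀ x ∈ supportedIn J, f x = 0) (hW : ∀ w, |walsh f w| ≤ 2 ^ m) : #J ≤ m := by
  have hbound : (2 : ℤ) ^ #Jᶜ * 2 ^ #J ≤ 2 ^ #Jᶜ * 2 ^ m :=
    calc (2 : ℤ) ^ #Jᶜ * 2 ^ #J = |∑ w ∈ supportedIn Jᶜ, walsh f w| := by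
          rw [sum_walsh_supportedIn_compl f hf, abs_of_nonneg (by positivity)]
      _ ≤ ∑ w ∈ supportedIn Jᶜ, |walsh f w| := abs_sum_le_sum_abs _ _
      _ ≤ 2 ^ #Jᶜ * 2 ^ m := by
          simpa [card_supportedIn] using sum_le_card_nsmul (supportedIn Jᶜ) _ _ fun w _ => hW w
  have := le_of_mul_le_mul_left hbound (by positivity)
  exact (pow_le_pow_iff_right₀ (by norm_num : (1 : ℤ) < 2)).mp this

end Walsh

section Translates

variable {G : Type*} [AddCommGroup G] [DecidableEq G]

lemma card_stabilizer_dvd_card (S : Finset G) : Nat.card (AddAction.stabilizer G S) ∣ #S := by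
  set H := AddAction.stabilizer G S
  have hS : (S : Set G) = QuotientAddGroup.mk (s := H) ⁻¹' (QuotientAddGroup.mk '' S) := by
    ext x
    simp only [Set.mem_preimage, Set.mem_image, mem_coe, QuotientAddGroup.eq]
    refine ⟨fun hx => ⟨x, hx, by simp⟩, fun ⟨s, hs, hsx⟩ => ?_⟩
    have := (AddAction.mem_stabilizer_finset.mp hsx s).mpr hs
    simpa using this
  rw [← Nat.card_eq_finsetCard]
  change _ ∣ Nat.card (S : Set G)
  rw [hS,
    Nat.card_congr (QuotientAddGroup.preimageMkEquivAddSubgroupProdSet _ _), Nat.card_prod]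
  exact dvd_mul_right _ _

lemma addOrderOf_dvd_card_of_image_add_eq {S : Finset G} {c : G} (h : S.image (· + c) = S) :
    addOrderOf c ∣ #S := by
  have hc : c ∈ AddAction.stabilizer G S := by
    rw [AddAction.mem_stabilizer_iff, vadd_finset_def]
    simpa only [vadd_eq_add, add_comm c] using h
  rw [← AddSubgroup.addOrderOf_mk c hc]
  exact (addOrderOf_dvd_natCard _).trans (card_stabilizer_dvd_card S)

lemma exists_ne_zero_image_add_eq_of_card_translates_lt [Fintype G] {S : Finset G}
    (h : #(univ.image fun j => S.image (· + j)) < Fintype.card G) :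
    ∃ c ≠ 0, S.image (· + c) = S := by
  obtain ⟨a, b, hab, hne⟩ : ∃ a b, S.image (· + a) = S.image (· + b) ∧ a ≠ b := by
    by_contra! hinj
    exact h.ne (card_image_of_injective _ fun a b hab => hinj a b hab) |>.elim
  refine ⟨a - b, sub_ne_zero.mpr hne, ?_⟩
  have := congrArg (image (· - b)) hab
  simpa only [image_image, Function.comp_def, add_sub_assoc, sub_self, add_zero,
    image_id'] using this

end Translates

section Parity

variable {n : ℕ}

def oddCount (S : Finset (Fin n)) : ℕ := #{t ∈ S | t.val % 2 = 1}

def evenCount (S : Finset (Fin n)) : ℕ := #{t ∈ S | t.val % 2 = 0}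

lemma oddCount_add_evenCount (S : Finset (Fin n)) : oddCount S + evenCount S = #S := by
  rw [oddCount, evenCount, ← card_filter_add_card_filter_not (s := S) (fun t => t.val % 2 = 1)]
  congr 2
  exact filter_congr fun t _ => by omega

lemma Fin.val_add_mod_two (a b : Fin (2 * n)) : (a + b).val % 2 = (a.val + b.val) % 2 := by
  rw [Fin.val_add]
  exact Nat.mod_mod_of_dvd _ (dvd_mul_right 2 n)

lemma oddCount_image_add (S : Finset (Fin (2 * n))) (j : Fin (2 * n)) :
    oddCount (S.image (· + j)) = #{t ∈ S | (t.val + j.val) % 2 = 1} := by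
  rw [oddCount, filter_image, card_image_of_injective _ (add_left_injective j)]
  simp only [Fin.val_add_mod_two]

lemma oddCount_image_add_of_even (S : Finset (Fin (2 * n))) {j : Fin (2 * n)}
    (hj : j.val % 2 = 0) : oddCount (S.image (· + j)) = oddCount S := by
  rw [oddCount_image_add, oddCount]
  exact congrArg card (filter_congr fun t _ => by omega)

lemma oddCount_image_add_of_odd (S : Finset (Fin (2 * n))) {j : Fin (2 * n)}
    (hj : j.val % 2 = 1) : oddCount (S.image (· + j)) = evenCount S := by
  rw [oddCount_image_add, evenCount]
  exact congrArg card (filter_congr fun t _ => by omega)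

lemma two_le_oddCount_image_add {S : Finset (Fin (2 * n))} (hodd : 2 ≤ oddCount S)
    (heven : 2 ≤ evenCount S) (j : Fin (2 * n)) : 2 ≤ oddCount (S.image (· + j)) := by
  rcases Nat.mod_two_eq_zero_or_one j.val with hj | hj
  · rwa [oddCount_image_add_of_even S hj]
  · rwa [oddCount_image_add_of_odd S hj]

lemma oddCount_eq_evenCount_of_odd_of_image_add_eq {S : Finset (Fin (2 * n))} {c : Fin (2 * n)}
    (hc : c.val % 2 = 1) (h : S.image (· + c) = S) : oddCount S = evenCount S := by
  rw [← oddCount_image_add_of_odd S hc, h]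

lemma evenCount_univ [NeZero n] : evenCount (univ : Finset (Fin (2 * n))) = n := by
  have hlt : 1 < 2 * n := by have := NeZero.pos n; omega
  have hinv : univ.image (· + ⟨1, hlt⟩) = (univ : Finset (Fin (2 * n))) :=
    image_univ_of_surjective (add_right_surjective _)
  have hsum := oddCount_add_evenCount (univ : Finset (Fin (2 * n)))
  rw [oddCount_eq_evenCount_of_odd_of_image_add_eq rfl hinv, card_univ, Fintype.card_fin] at hsum
  omega

lemma Fin.val_nsmul_eq [NeZero n] (m : ℕ) (c : Fin n) : (m • c).val = m * c.val % n := by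
  induction m with
  | zero => simp
  | succ m ih => rw [succ_nsmul, Fin.val_add, ih, Nat.mod_add_mod, add_one_mul]

lemma Fin.addOrderOf_of_even_of_ne_zero {p : ℕ} [Fact p.Prime] {c : Fin (2 * p)} (hc : c ≠ 0)
    (he : c.val % 2 = 0) : addOrderOf c = p := by
  refine addOrderOf_eq_prime (Fin.ext ?_) hc
  obtain ⟨c0, hc0⟩ : ∃ c0, c.val = 2 * c0 := ⟨c.val / 2, by omega⟩
  rw [Fin.val_nsmul_eq, hc0, Fin.val_zero, mul_left_comm, ← mul_assoc, Nat.mul_mod_right]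

lemma oddCount_eq_evenCount_of_image_add_eq {p : ℕ} [Fact p.Prime] (hp2 : p ≠ 2)
    {S : Finset (Fin (2 * p))} (hS : Even #S) {c : Fin (2 * p)} (hc : c ≠ 0)
    (h : S.image (· + c) = S) : oddCount S = evenCount S := by
  rcases Nat.mod_two_eq_zero_or_one c.val with he | ho
  -- an even `c ≠ 0` has order `p`, so `2 * p ∣ #S` and `S` is empty or everything
  · have hp_dvd : p ∣ #S := by
      have := addOrderOf_dvd_card_of_image_add_eq h
      rwa [Fin.addOrderOf_of_even_of_ne_zero hc he] at this
    have h2p : 2 * p ∣ #S := Nat.Coprime.mul_dvd_of_dvd_of_dvd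
      ((Nat.coprime_primes Nat.prime_two Fact.out).mpr hp2.symm) (even_iff_two_dvd.mp hS) hp_dvd
    obtain hS0 | hSpos := Nat.eq_zero_or_pos #S
    · rw [card_eq_zero.mp hS0]; rfl
    · have hSuniv : S = univ := by
        rw [← card_eq_iff_eq_univ, Fintype.card_fin]
        exact le_antisymm (by simpa using card_le_univ S) (Nat.le_of_dvd hSpos h2p)
      have hsum := oddCount_add_evenCount (univ : Finset (Fin (2 * p)))
      rw [card_univ, Fintype.card_fin, evenCount_univ] at hsum
      rw [hSuniv, evenCount_univ]
      omega
  · exact oddCount_eq_evenCount_of_odd_of_image_add_eq ho h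

lemma two_le_oddCount_and_evenCount_of_card_translates_lt {p k : ℕ} [Fact p.Prime]
    (hp2 : p ≠ 2) (hk : 1 < k) {S : Finset (Fin (2 * p))} (hS : #S = 2 * k)
    (h : #(univ.image fun j => S.image (· + j)) < 2 * p) :
    2 ≤ oddCount S ∧ 2 ≤ evenCount S := by
  obtain ⟨c, hc, hinv⟩ :=
    exists_ne_zero_image_add_eq_of_card_translates_lt (by rwa [Fintype.card_fin])
  have heq := oddCount_eq_evenCount_of_image_add_eq hp2 ⟨k, by rw [hS, two_mul]⟩ hc hinv
  have hsum := oddCount_add_evenCount S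
  omega

def evenIndicesAndLast (n : ℕ) [NeZero n] : Finset (Fin (2 * n)) :=
  insert ⟨2 * n - 1, by have := NeZero.pos n; omega⟩
    ({t | t.val % 2 = 0} : Finset (Fin (2 * n)))

lemma card_evenIndicesAndLast [NeZero n] : #(evenIndicesAndLast n) = n + 1 := by
  have hpos := NeZero.pos n
  rw [evenIndicesAndLast, card_insert_of_notMem (by simp only [mem_filter]; omega)]
  exact congrArg (· + 1) evenCount_univ

lemma prod_eq_zero_of_two_le_oddCount [NeZero n] {T : Finset (Fin (2 * n))}
    (hT : 2 ≤ oddCount T) {x : Fin (2 * n) → ZMod 2}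
    (hx : x ∈ supportedIn (evenIndicesAndLast n)) :
    ∏ t ∈ T, x t = 0 := by
  obtain ⟨t, ht, htb⟩ := exists_mem_ne hT ⟨2 * n - 1, by have := NeZero.pos n; omega⟩
  rw [mem_filter] at ht
  refine prod_eq_zero ht.1 (mem_supportedIn.mp hx t ?_)
  have htb' : t.val ≠ 2 * n - 1 := fun h => htb (Fin.ext h)
  simp only [evenIndicesAndLast, mem_insert, mem_filter, mem_univ, true_and, Fin.ext_iff]
  omega

end Parity

/-- Let `n = 2p` (`p` odd prime) and let `f` be a homogeneous rotation
symmetric function of even degree `d = 2k > 2`, a sum of MRS components `f_i` with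
monomial index sets `S i ∋ 0` of size `d`, where components `i < s` are short-cycle
and components `i ≥ s` are full-cycle. If every full-cycle component has a number `r`
of odd indices with `2 ≤ r ≤ d - 2`, then `f` is not bent. -/
theorem stmt19 (p k s l : ℕ) (hp : p.Prime) (hp2 : 2 < p) (hk : 1 < k)
    (S : Fin l → Finset (Fin (2*p)))
    (hdeg : ∀ i, (S i).card = 2*k)
    (hshort : ∀ i : Fin l, i.val < s →
      (Finset.univ.image (fun j : Fin (2*p) => (S i).image (· + j))).card < 2*p)
    (hodd : ∀ i : Fin l, s ≤ i.val →
      2 ≤ ((S i).filter (fun j => j.val % 2 = 1)).card ∧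
      ((S i).filter (fun j => j.val % 2 = 1)).card ≤ 2*k - 2) :
    ¬ (∀ w : Fin (2*p) → ZMod 2,
      (∑ x : Fin (2*p) → ZMod 2,
        (-1 : ℤ) ^ (((∑ i : Fin l, ∑ T ∈ Finset.univ.image
              (fun j : Fin (2*p) => (S i).image (· + j)), ∏ t ∈ T, x t)
          + ∑ i, w i * x i).val)) = 2 ^ p ∨
      (∑ x : Fin (2*p) → ZMod 2,
        (-1 : ℤ) ^ (((∑ i : Fin l, ∑ T ∈ Finset.univ.image
              (fun j : Fin (2*p) => (S i).image (· + j)), ∏ t ∈ T, x t)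
          + ∑ i, w i * x i).val)) = -(2 ^ p)) := by
  intro hbent
  have : Fact p.Prime := ⟨hp⟩
  have hmonomial : ∀ i, ∀ T ∈ univ.image (fun j => (S i).image (· + j)),
      2 ≤ oddCount T := by
    intro i T hT
    obtain ⟨j, -, rfl⟩ := mem_image.mp hT
    have hboth : 2 ≤ oddCount (S i) ∧ 2 ≤ evenCount (S i) := by
      rcases lt_or_ge i.val s with hi | hi
      · exact two_le_oddCount_and_evenCount_of_card_translates_lt hp2.ne' hk (hdeg i)
          (hshort i hi)
      · have hsum := oddCount_add_evenCount (S i)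
        have hr := hodd i hi
        exact ⟨hr.1, by rw [hdeg i] at hsum; unfold oddCount at hsum; omega⟩
    exact two_le_oddCount_image_add hboth.1 hboth.2 j
  have hvanish : ∀ x ∈ supportedIn (evenIndicesAndLast p), (∑ i : Fin l, ∑ T ∈ univ.image
      (fun j : Fin (2*p) => (S i).image (· + j)), ∏ t ∈ T, x t) = 0 := fun x hx =>
    sum_eq_zero fun i _ => sum_eq_zero fun T hT =>
      prod_eq_zero_of_two_le_oddCount (hmonomial i T hT) hx
  have hJ := card_le_of_abs_walsh_le _ hvanish (m := p) fun w => by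
    rcases hbent w with h | h <;> simp only [walsh, chi, h, abs_neg, abs_pow, abs_two, le_refl]
  rw [card_evenIndicesAndLast] at hJ
  omega
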